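/- Let $\epsilon > 0$, $k_0 \in \mathbb{N}$, and suppose $1 + 4\pi^2 k^2 - \epsilon(2 + 4\pi^2(j^2+l^2)) \neq 0$ for all integers $j, l, k$ with $|j|,|l| \le k_0$ and $j + l = k$. Given initial data $(v_j(0))_{|j| \le k_0}$, define $v_k(t) = e^{-(1+4\pi^2k^2)t} v_k(0)$ and $u_k(t) = \sum_{j,l:\, |j|,|l| \le k_0,\, j+l=k} e^{-(2+4\pi^2(j^2+l^2))t} \frac{v_j(0) v_l(0)}{1 + 4\pi^2 k^2 - \epsilon(2 + 4\pi^2(j^2+l^2))}$. Then for every $t \in \mathbb{R}$ and every $k$, $(u_k, v_k)$ satisfies $\epsilon u_k'(t) = -(1 + 4\pi^2 k^2) u_k(t) + \sum_{j,l:\,|j|,|l| \le k_0,\, j+l=k} v_j(t) v_l(t)$ and $v_k'(t) = -(1+4\pi^2k^2) v_k(t)$. -/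

import Mathlib

/-!
Each Fourier mode `v_k` decays like `exp (-λ_k t)` with `λ_k = 1 + 4π²k²`, so the quadratic forcing
`∑_{j+l=k} v_j v_l` of the `u_k`-equation is a finite sum of exponentials `exp (-μ t)` with
`μ = λ_j + λ_l`. The linear equation `ε u' = -λ u + a exp (-μ t)` has the particular solution
`exp (-μ t) · a / (λ - ε μ)` whenever `λ ≠ ε μ`, and the graph formula is the superposition of
these particular solutions.
-/

open Real Finset

theorem hasDerivAt_exp_neg_mul_mul (μ c t : ℝ) :
    HasDerivAt (fun s => exp (-μ * s) * c) (-μ * (exp (-μ * t) * c)) t := by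
  have h := (((hasDerivAt_id t).const_mul (-μ)).exp).mul_const c
  simpa only [id_eq, mul_one, mul_comm, mul_left_comm] using h

theorem hasDerivAt_exp_neg_mul_mul_div {ε lam : ℝ} (hε : ε ≠ 0) {μ : ℝ} (hres : lam - ε * μ ≠ 0)
    (a t : ℝ) :
    HasDerivAt (fun s => exp (-μ * s) * (a / (lam - ε * μ)))
      (ε⁻¹ * (-lam * (exp (-μ * t) * (a / (lam - ε * μ))) + exp (-μ * t) * a)) t := by
  convert hasDerivAt_exp_neg_mul_mul μ (a / (lam - ε * μ)) t using 1
  field_simp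
  ring

theorem HasDerivAt.fun_sum_of_linear_ode {ι : Type*} {S : Finset ι} {f : ι → ℝ → ℝ}
    {g : ι → ℝ} {c lam t : ℝ} (h : ∀ p ∈ S, HasDerivAt (f p) (c * (-lam * f p t + g p)) t) :
    HasDerivAt (fun s => ∑ p ∈ S, f p s) (c * (-lam * ∑ p ∈ S, f p t + ∑ p ∈ S, g p)) t := by
  refine (HasDerivAt.fun_sum h).congr_deriv ?_
  rw [mul_sum, ← sum_add_distrib, mul_sum]

/-- The explicit graph formula defines an invariant manifold for the Galerkin
truncation of the fast-slow system: the explicitly given `(u_k, v_k)` solve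
`ε u_k' = -(1+4π²k²) u_k + ∑_{j+l=k} v_j v_l` and `v_k' = -(1+4π²k²) v_k`
for all times. -/
theorem stmt_6 (ε : ℝ) (hε : 0 < ε) (k0 : ℕ) (v0 : ℤ → ℝ)
    (hres : ∀ j l k : ℤ, |j| ≤ (k0 : ℤ) → |l| ≤ (k0 : ℤ) → j + l = k →
      1 + 4 * π ^ 2 * (k : ℝ) ^ 2 - ε * (2 + 4 * π ^ 2 * ((j : ℝ) ^ 2 + (l : ℝ) ^ 2)) ≠ 0)
    (v : ℤ → ℝ → ℝ)
    (hv : ∀ k t, v k t = Real.exp (-(1 + 4 * π ^ 2 * (k : ℝ) ^ 2) * t) * v0 k)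
    (u : ℤ → ℝ → ℝ)
    (hu : ∀ k t, u k t =
      ∑ p ∈ ((Finset.Icc (-(k0 : ℤ)) (k0 : ℤ)) ×ˢ (Finset.Icc (-(k0 : ℤ)) (k0 : ℤ))).filter
          (fun p => p.1 + p.2 = k),
        Real.exp (-(2 + 4 * π ^ 2 * ((p.1 : ℝ) ^ 2 + (p.2 : ℝ) ^ 2)) * t) *
          (v0 p.1 * v0 p.2 /
            (1 + 4 * π ^ 2 * (k : ℝ) ^ 2 - ε * (2 + 4 * π ^ 2 * ((p.1 : ℝ) ^ 2 + (p.2 : ℝ) ^ 2))))) :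
    ∀ (t : ℝ) (k : ℤ),
      HasDerivAt (u k)
        (ε⁻¹ * (-(1 + 4 * π ^ 2 * (k : ℝ) ^ 2) * u k t +
          ∑ p ∈ ((Finset.Icc (-(k0 : ℤ)) (k0 : ℤ)) ×ˢ (Finset.Icc (-(k0 : ℤ)) (k0 : ℤ))).filter
              (fun p => p.1 + p.2 = k),
            v p.1 t * v p.2 t)) t ∧
      HasDerivAt (v k) (-(1 + 4 * π ^ 2 * (k : ℝ) ^ 2) * v k t) t := by
  intro t k
  have hv_prod : ∀ j l : ℤ, v j t * v l t =
      exp (-(2 + 4 * π ^ 2 * ((j : ℝ) ^ 2 + (l : ℝ) ^ 2)) * t) * (v0 j * v0 l) := by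
    intro j l
    rw [hv, hv, mul_mul_mul_comm, ← exp_add]
    ring_nf
  have hres_mem :
      ∀ p ∈ ((Icc (-(k0 : ℤ)) k0) ×ˢ (Icc (-(k0 : ℤ)) k0)).filter (fun p => p.1 + p.2 = k),
      1 + 4 * π ^ 2 * (k : ℝ) ^ 2 - ε * (2 + 4 * π ^ 2 * ((p.1 : ℝ) ^ 2 + (p.2 : ℝ) ^ 2)) ≠ 0 := by
    intro p hp
    obtain ⟨hp, hsum⟩ := mem_filter.mp hp
    obtain ⟨hj, hl⟩ := mem_product.mp hp
    exact hres p.1 p.2 k (abs_le.mpr (mem_Icc.mp hj)) (abs_le.mpr (mem_Icc.mp hl)) hsum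
  constructor
  · rw [funext (hu k)]
    convert HasDerivAt.fun_sum_of_linear_ode fun p hp =>
      hasDerivAt_exp_neg_mul_mul_div hε.ne' (hres_mem p hp) (v0 p.1 * v0 p.2) t using 3
    exact sum_congr rfl fun p _ => hv_prod p.1 p.2
  · rw [funext (hv k)]
    exact hasDerivAt_exp_neg_mul_mul _ _ t
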